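/- arXiv:1606.02568 — 4 statements merged into one kernel-verified Lean document; each statement's English description precedes it below -/
import Mathlib

section
/- Let N ≥ 1 be an integer and let n ≥ 4 be an even integer. Suppose c_0, c_1, …, c_{Nn} are integers such that (e_N)^n = Σ_{k=0}^{Nn} c_k · e_k in ℤ[X]. Then c_{Nn} = 1 and c_{Nn−2} = n − 1. -/
open Polynomial

/-- Renormalized Chebyshev polynomials of the second kind:
`e 0 = 1`, `e 1 = X`, `e (l+2) = X * e (l+1) - e l`. -/
noncomputable def e : ℕ → Polynomial ℤ
  | 0 => 1
  | 1 => X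
  | (l + 2) => X * e (l + 1) - e l

/-!
Compare the coefficients of `X ^ (N * n)` and `X ^ (N * n - 2)` on both sides. Reversal turns
the top three coefficients of a monic polynomial into its bottom three and is multiplicative
over `ℤ`. Since `(e N).reverse = 1 + 0 * X - (N - 1) * X ^ 2 + …`, the power
`(e N ^ n).reverse` starts with `1 + 0 * X - n * (N - 1) * X ^ 2`. On the right, only
`e (N * n)`, `e (N * n - 1)` and `e (N * n - 2)` reach degree `N * n - 2`, and they contribute
`-(N * n - 1) * c (N * n) + c (N * n - 2)`.
-/

namespace Polynomial

theorem reverse_pow {R : Type*} [Semiring R] [NoZeroDivisors R] (p : R[X]) (n : ℕ) :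
    (p ^ n).reverse = p.reverse ^ n := by
  induction n with
  | zero => simpa using reverse_C (1 : R)
  | succ n ih => rw [pow_succ, reverse_mul_of_domain, ih, pow_succ]

theorem coeff_pow_one_eq_zero_and_coeff_pow_two {R : Type*} [CommSemiring R] {f : R[X]}
    (h0 : f.coeff 0 = 1) (h1 : f.coeff 1 = 0) (n : ℕ) :
    (f ^ n).coeff 1 = 0 ∧ (f ^ n).coeff 2 = n * f.coeff 2 := by
  induction n with
  | zero => simp [coeff_one]
  | succ n ih =>
    have h0n : (f ^ n).coeff 0 = 1 := by
      rw [coeff_zero_eq_eval_zero, eval_pow, ← coeff_zero_eq_eval_zero, h0, one_pow]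
    simp only [pow_succ, coeff_mul, Finset.Nat.sum_antidiagonal_succ,
      Finset.Nat.antidiagonal_zero, Finset.sum_singleton, h0n, h0, h1, ih.1, ih.2]
    constructor
    · simp
    · push_cast; ring

end Polynomial

theorem e_add_two (l : ℕ) : e (l + 2) = X * e (l + 1) - e l := rfl

theorem natDegree_e_and_monic_e (l : ℕ) : (e l).natDegree = l ∧ (e l).Monic := by
  induction l using e.induct with
  | case1 => exact ⟨natDegree_one, monic_one⟩
  | case2 => exact ⟨natDegree_X, monic_X⟩
  | case3 l ih_succ ih =>
    have hXe : (X * e (l + 1)).natDegree = l + 2 := by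
      rw [natDegree_X_mul ih_succ.2.ne_zero, ih_succ.1]
    have hlt : (e l).natDegree < (X * e (l + 1)).natDegree := by rw [ih.1, hXe]; omega
    refine ⟨?_, ?_⟩
    · rw [e_add_two, natDegree_sub_eq_left_of_natDegree_lt hlt, hXe]
    · exact (monic_X.mul ih_succ.2).sub_of_left (Polynomial.degree_lt_degree hlt)

theorem natDegree_e (l : ℕ) : (e l).natDegree = l := (natDegree_e_and_monic_e l).1

theorem monic_e (l : ℕ) : (e l).Monic := (natDegree_e_and_monic_e l).2

theorem coeff_e_of_lt {l d : ℕ} (h : l < d) : (e l).coeff d = 0 :=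
  coeff_eq_zero_of_natDegree_lt (by rwa [natDegree_e])

theorem coeff_e_self (l : ℕ) : (e l).coeff l = 1 := by
  simpa [natDegree_e] using (monic_e l).coeff_natDegree

theorem coeff_e_succ_self (l : ℕ) : (e (l + 1)).coeff l = 0 := by
  induction l with
  | zero => simp [e]
  | succ l ih => rw [e_add_two, coeff_sub, coeff_X_mul, ih, coeff_e_of_lt (by omega), sub_zero]

theorem coeff_e_add_two_self (l : ℕ) : (e (l + 2)).coeff l = -(l + 1) := by
  induction l with
  | zero => simp [e]
  | succ l ih =>
    rw [e_add_two, coeff_sub, coeff_X_mul, ih, coeff_e_self]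
    push_cast; ring

theorem coeff_one_reverse_e (l : ℕ) : (e l).reverse.coeff 1 = 0 := by
  rcases l with _ | l
  · simp [e, nextCoeff]
  · rw [coeff_one_reverse, nextCoeff_of_natDegree_pos (by rw [natDegree_e]; omega), natDegree_e,
      Nat.add_sub_cancel, coeff_e_succ_self]

theorem coeff_two_reverse_e_succ (l : ℕ) : (e (l + 1)).reverse.coeff 2 = -l := by
  rcases l with _ | l
  · simp [e, coeff_reverse, revAt, coeff_X]
  · rw [coeff_reverse, natDegree_e, revAt_le (by omega), show l + 1 + 1 - 2 = l by omega,
      coeff_e_add_two_self]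
    push_cast; ring

theorem coeff_two_reverse_e_succ_pow (l n : ℕ) : (e (l + 1) ^ n).reverse.coeff 2 = -(n * l) := by
  have h0 : (e (l + 1)).reverse.coeff 0 = 1 := by
    rw [coeff_zero_reverse, (monic_e _).leadingCoeff]
  rw [reverse_pow, (coeff_pow_one_eq_zero_and_coeff_pow_two h0 (coeff_one_reverse_e _) n).2,
    coeff_two_reverse_e_succ]
  ring

theorem coeff_sum_range_e_of_le (c : ℕ → ℤ) {m d : ℕ} (h : m ≤ d) :
    (∑ k ∈ Finset.range m, C (c k) * e k).coeff d = 0 := by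
  rw [finsetSum_coeff]
  exact Finset.sum_eq_zero fun k hk => by
    rw [coeff_C_mul, coeff_e_of_lt (by simp at hk; omega), mul_zero]

theorem coeff_sum_range_e_self (c : ℕ → ℤ) (m : ℕ) :
    (∑ k ∈ Finset.range (m + 1), C (c k) * e k).coeff m = c m := by
  rw [Finset.sum_range_succ, coeff_add, coeff_sum_range_e_of_le c le_rfl, coeff_C_mul,
    coeff_e_self, zero_add, mul_one]

theorem coeff_sum_range_e_sub_two (c : ℕ → ℤ) (m : ℕ) :
    (∑ k ∈ Finset.range (m + 3), C (c k) * e k).coeff m = c m - (m + 1) * c (m + 2) := by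
  simp only [Finset.sum_range_succ, coeff_add, coeff_sum_range_e_of_le c le_rfl, coeff_C_mul,
    coeff_e_self, coeff_e_succ_self, coeff_e_add_two_self]
  ring

theorem coeff_top_of_pow_expansion_general (N n : ℕ) (hN : 1 ≤ N) (hn : 4 ≤ n)
    (c : ℕ → ℤ)
    (hc : (e N) ^ n = ∑ k ∈ Finset.range (N * n + 1), C (c k) * e k) :
    c (N * n) = 1 ∧ c (N * n - 2) = (n : ℤ) - 1 := by
  obtain ⟨l, rfl⟩ : ∃ l, N = l + 1 := ⟨N - 1, by omega⟩
  obtain ⟨m, hm⟩ : ∃ m, (l + 1) * n = m + 2 := ⟨(l + 1) * n - 2, by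
    have := Nat.le_mul_of_pos_left n (by omega : 0 < l + 1); omega⟩
  rw [hm] at hc
  have hmonic := (monic_e (l + 1)).pow n
  have hdeg : (e (l + 1) ^ n).natDegree = m + 2 := by
    rw [(monic_e _).natDegree_pow, natDegree_e, ← hm, mul_comm]
  have htop : c (m + 2) = 1 := by
    rw [← coeff_sum_range_e_self c, ← hc, ← hdeg, hmonic.coeff_natDegree]
  have hsub : (e (l + 1) ^ n).coeff m = -(n * l) := by
    rw [← coeff_two_reverse_e_succ_pow, coeff_reverse, hdeg, revAt_le (by omega),
      Nat.add_sub_cancel]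
  rw [hc, coeff_sum_range_e_sub_two, htop] at hsub
  have hm_int : (m : ℤ) + 2 = (l + 1) * n := by exact_mod_cast hm.symm
  refine ⟨by rw [hm, htop], ?_⟩
  rw [hm, Nat.add_sub_cancel]
  linear_combination hsub + hm_int

theorem coeff_top_of_pow_expansion (N n : ℕ) (hN : 1 ≤ N) (hn : 4 ≤ n)
    (hne : Even n) (c : ℕ → ℤ)
    (hc : (e N) ^ n = ∑ k ∈ Finset.range (N * n + 1), C (c k) * e k) :
    c (N * n) = 1 ∧ c (N * n - 2) = (n : ℤ) - 1 :=
  coeff_top_of_pow_expansion_general N n hN hn c hc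
end

section
/- Let n ≥ 4 be an even integer and let q ∈ ℂ satisfy q^n = 1 and q ≠ 1 (so |q| = 1 and the complex conjugate of q is q⁻¹). Let V be a complex vector space equipped with a sesquilinear hermitian form ⟨·,·⟩, and let u_1, …, u_{n−2} ∈ V satisfy: ⟨u_j, u_j⟩ = −i(q − q̄) for all 1 ≤ j ≤ n−2; ⟨u_j, u_{j+1}⟩ = i(1 − q̄) for all 1 ≤ j ≤ n−3; and ⟨u_j, u_k⟩ = 0 whenever |j − k| > 1. Then the vectors u_1, …, u_{n−2} are linearly independent. -/
/-! If `∑ gⱼ uⱼ = 0`, pairing with each `uₖ` shows that the coefficients, padded by zeros at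
both ends, satisfy `gₖ₋₁ - (1 + q) gₖ + q gₖ₊₁ = 0`: since `q̄ = q⁻¹`, the Gram matrix is
`i (q - 1) / q` times this tridiagonal pattern. Hence the differences `dₖ = gₖ₋₁ - gₖ` satisfy
`dₖ = q dₖ₊₁`, and they telescope to `0 = d_{n-2} (1 + q + ⋯ + q^{n-2})`. The geometric sum is
nonzero because `q^{n-1} = q⁻¹ ≠ 1`, so all differences vanish and `g = 0`. -/

open Complex Finset Function

def tridiag {R : Type*} [Ring R] (q : R) (j k : ℕ) : R :=
  if j + 1 = k then 1 else if j = k then -(1 + q) else if j = k + 1 then q else 0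

theorem geom_sum_ne_zero_of_pow_eq_one {R : Type*} [Ring R] {q : R} {m : ℕ}
    (hq : q ^ (m + 2) = 1) (hq1 : q ≠ 1) : ∑ i ∈ range (m + 1), q ^ i ≠ 0 := by
  intro h
  have hpow : q ^ (m + 1) = 1 := sub_eq_zero.mp (by rw [← geom_sum_mul, h, zero_mul])
  exact hq1 (by rw [← hq, pow_succ, hpow, one_mul])

theorem sum_ite_eq_extend {ι α β : Type*} [Fintype ι] [DecidableEq α] [AddCommMonoid β]
    {f : ι → α} (hf : Injective f) (g : ι → β) (a : α) :
    ∑ i, (if f i = a then g i else 0) = extend f g 0 a := by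
  by_cases h : ∃ i, f i = a
  · obtain ⟨i, rfl⟩ := h
    rw [hf.extend_apply]
    classical
    simp only [hf.eq_iff, Fintype.sum_ite_eq']
  · rw [extend_apply' _ _ _ h]
    exact sum_eq_zero fun i _ => if_neg fun hi => h ⟨i, hi⟩

theorem eq_zero_of_three_term_recurrence {R : Type*} [CommRing R] [NoZeroDivisors R] {q : R}
    {m : ℕ} {x : ℕ → R} (hq : ∑ i ∈ range (m + 1), q ^ i ≠ 0) (h0 : x 0 = 0)
    (hm : x (m + 1) = 0) (hrec : ∀ k < m, x k - (1 + q) * x (k + 1) + q * x (k + 2) = 0) :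
    ∀ k ≤ m + 1, x k = 0 := by
  have hpow : ∀ i ≤ m, x (m - i) - x (m - i + 1) = q ^ i * (x m - x (m + 1)) := by
    intro i hi
    induction i with
    | zero => simp
    | succ i ih =>
      have h := hrec (m - (i + 1)) (by omega)
      rw [show m - (i + 1) + 1 = m - i by omega, show m - (i + 1) + 2 = m - i + 1 by omega] at h
      rw [show m - (i + 1) + 1 = m - i by omega, pow_succ]
      linear_combination h + q * ih (by omega)
  have hlast : x m - x (m + 1) = 0 := by
    have htel : ∑ i ∈ range (m + 1), (x (m - i) - x (m - i + 1)) = 0 := by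
      have hreflect := sum_range_reflect (fun k => x k - x (k + 1)) (m + 1)
      simp only [add_tsub_cancel_right] at hreflect
      rw [hreflect, sum_range_sub', h0, hm, sub_zero]
    rw [sum_congr rfl fun i hi => hpow i (Nat.lt_succ_iff.mp (mem_range.mp hi)), ← sum_mul] at htel
    exact (mul_eq_zero.mp htel).resolve_left hq
  intro k hk
  induction k with
  | zero => exact h0
  | succ k ih =>
    have h := hpow (m - k) (by omega)
    rw [Nat.sub_sub_self (by omega), hlast, mul_zero, ih (by omega)] at h
    linear_combination -h

theorem linearIndependent_of_apply_eq_mul_tridiag {K M N : Type*} [CommRing K]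
    [NoZeroDivisors K] [AddCommGroup M] [Module K M] [AddCommGroup N] [Module K N]
    {σ : K →+* K} (B : M →ₗ[K] N →ₛₗ[σ] K) {m : ℕ} {u : Fin m → M} {v : Fin m → N} {c q : K}
    (hc : c ≠ 0) (hq : ∑ i ∈ range (m + 1), q ^ i ≠ 0)
    (huv : ∀ j k, B (u j) (v k) = c * tridiag q j k) :
    LinearIndependent K u := by
  classical
  rw [Fintype.linearIndependent_iff]
  intro g hg
  have hinj : Injective fun j : Fin m => (j : ℕ) + 1 := fun i j h => Fin.ext (by simpa using h)
  -- `x (j + 1) = g j`, padded by `x 0 = x (m + 1) = 0`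
  set x := extend (fun j : Fin m => (j : ℕ) + 1) g 0
  have hcol (k : Fin m) : c * (x k - (1 + q) * x (k + 1) + q * x (k + 2)) = 0 := by
    have hterm (j : Fin m) : g j * (c * tridiag q j k) =
        c * ((if (j : ℕ) + 1 = k then g j else 0)
          - (1 + q) * (if (j : ℕ) + 1 = k + 1 then g j else 0)
          + q * (if (j : ℕ) + 1 = k + 2 then g j else 0)) := by
      unfold tridiag
      split_ifs <;> first | omega | ring
    have h := congr(B $hg (v k))
    simp only [map_sum, map_smul, LinearMap.sum_apply, LinearMap.smul_apply, smul_eq_mul, huv,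
      map_zero, LinearMap.zero_apply, hterm] at h
    simpa only [← mul_sum, sum_add_distrib, sum_sub_distrib, sum_ite_eq_extend hinj] using h
  have hx := eq_zero_of_three_term_recurrence hq (extend_apply' _ _ _ (by simp))
    (extend_apply' _ _ _ fun ⟨j, hj⟩ => by have := j.isLt; simp at hj; omega)
    fun k hk => (mul_eq_zero.mp (hcol ⟨k, hk⟩)).resolve_left hc
  intro j
  rw [← hinj.extend_apply g 0 j]
  exact hx _ (by omega)

theorem mcmullen_spanning_set_linearIndependent_general (n : ℕ) (hn : 4 ≤ n)
    (q : ℂ) (hq : q ^ n = 1) (hq1 : q ≠ 1)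
    {V : Type*} [AddCommGroup V] [Module ℂ V]
    (B : V →ₗ[ℂ] V →ₛₗ[starRingEnd ℂ] ℂ)
    (hherm : ∀ x y : V, B y x = starRingEnd ℂ (B x y))
    (u : Fin (n - 2) → V)
    (hdiag : ∀ j, B (u j) (u j) = -I * (q - starRingEnd ℂ q))
    (hadj : ∀ j k : Fin (n - 2), (j : ℕ) + 1 = (k : ℕ) →
      B (u j) (u k) = I * (1 - starRingEnd ℂ q))
    (hfar : ∀ j k : Fin (n - 2), 1 < ((j : ℤ) - (k : ℤ)).natAbs →
      B (u j) (u k) = 0) :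
    LinearIndependent ℂ u := by
  have hq0 : q ≠ 0 := by rintro rfl; simp [zero_pow (by omega : n ≠ 0)] at hq
  have hconj : starRingEnd ℂ q = q⁻¹ :=
    (inv_eq_conj (norm_eq_one_of_pow_eq_one hq (by omega))).symm
  have hgram (j k : Fin (n - 2)) : B (u j) (u k) = I * (q - 1) / q * tridiag q j k := by
    unfold tridiag
    split_ifs with hjk hjk' hkj
    · rw [hadj j k hjk, hconj]; field_simp
    · rw [Fin.ext hjk', hdiag, hconj]; field_simp; ring
    · rw [hherm, hadj k j hkj.symm, hconj, map_mul, map_sub, map_one, conj_I, map_inv₀, hconj,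
        inv_inv]
      field_simp; ring
    · rw [hfar j k (by omega), mul_zero]
  refine linearIndependent_of_apply_eq_mul_tridiag B (by simp [hq0, hq1, sub_eq_zero]) ?_ hgram
  exact geom_sum_ne_zero_of_pow_eq_one (by rwa [Nat.sub_add_cancel (by omega)]) hq1

theorem mcmullen_spanning_set_linearIndependent (n : ℕ) (hn : 4 ≤ n)
    (hne : Even n) (q : ℂ) (hq : q ^ n = 1) (hq1 : q ≠ 1)
    {V : Type*} [AddCommGroup V] [Module ℂ V]
    (B : V →ₗ[ℂ] V →ₛₗ[starRingEnd ℂ] ℂ)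
    (hherm : ∀ x y : V, B y x = starRingEnd ℂ (B x y))
    (u : Fin (n - 2) → V)
    (hdiag : ∀ j, B (u j) (u j) = -I * (q - starRingEnd ℂ q))
    (hadj : ∀ j k : Fin (n - 2), (j : ℕ) + 1 = (k : ℕ) →
      B (u j) (u k) = I * (1 - starRingEnd ℂ q))
    (hfar : ∀ j k : Fin (n - 2), 1 < ((j : ℤ) - (k : ℤ)).natAbs →
      B (u j) (u k) = 0) :
    LinearIndependent ℂ u :=
  mcmullen_spanning_set_linearIndependent_general n hn q hq hq1 B hherm u hdiag hadj hfar
end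

section
/- Let n ≥ 4 be an even integer, let s ∈ ℂ* be such that q = s² satisfies q^n = 1 and q ≠ 1, and set δ = −s − s⁻¹. Let V be a complex vector space with a sesquilinear hermitian form ⟨·,·⟩, and let v_1, …, v_{n−1} ∈ V satisfy: ⟨v_j, v_j⟩ = −δ for all j; ⟨v_j, v_k⟩ = −1 whenever |j − k| = 1; and ⟨v_j, v_k⟩ = 0 whenever |j − k| > 1. Assume moreover that v_{n−1} lies in the linear span of v_1, …, v_{n−2}. Then v_{n−1} = e_1(δ)·v_{n−2} − e_2(δ)·v_{n−3} + … + (−1)^{n−1} e_{n−2}(δ)·v_1, i.e. v_{n−1} = Σ_{j=1}^{n−2} (−1)^{j+1} e_j(δ) v_{n−1−j}. -/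
/-!
Write `v (n-1) = ∑ c i • v i` and let `a = c - single (n-1) 1` be the coefficients of the
resulting relation among `v 1, …, v (n-1)`. Pairing the relation with `v k`, `1 ≤ k ≤ n-2`,
against the tridiagonal Gram matrix gives the Chebyshev recurrence
`a (k+2) = x a (k+1) - a k` with `x = s + s⁻¹ = -δ`; as `a 0 = 0` this forces
`a (k+1) = e_k(x) a 1`, and `a (n-1) = -1` fixes `a 1`. From
`e_l(x) (s - s⁻¹) = s^(l+1) - s^(-(l+1))` and `s^(2n) = 1` one gets
`e_i(x) e_(n-2)(x) = e_j(x)` for `i + j = n-2`, hence `a k = -e_(n-1-k)(x)`;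
finally `e_j(-x) = (-1)^j e_j(x)`.
-/

open Polynomial
section Chebyshev

variable {R : Type*} [CommRing R]

@[simp]
lemma aeval_e_zero (x : R) : aeval x (e 0) = 1 := by simp [e]

@[simp]
lemma aeval_e_one (x : R) : aeval x (e 1) = x := by simp [e]

lemma aeval_e_add_two (x : R) (l : ℕ) :
    aeval x (e (l + 2)) = x * aeval x (e (l + 1)) - aeval x (e l) := by
  simp [e]

lemma aeval_neg_e (x : R) (l : ℕ) : aeval (-x) (e l) = (-1) ^ l * aeval x (e l) := by
  induction l using Nat.twoStepInduction with
  | zero => simp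
  | one => simp
  | more l ih₀ ih₁ =>
    rw [aeval_e_add_two, aeval_e_add_two, ih₀, ih₁]
    ring

lemma aeval_e_add_mul_sub {x y : R} (hxy : x * y = 1) (l : ℕ) :
    aeval (x + y) (e l) * (x - y) = x ^ (l + 1) - y ^ (l + 1) := by
  induction l using Nat.twoStepInduction with
  | zero => simp
  | one => rw [aeval_e_one]; ring
  | more l ih₀ ih₁ =>
    rw [aeval_e_add_two]
    linear_combination (x + y) * ih₁ - ih₀ + (x ^ (l + 1) - y ^ (l + 1)) * hxy

lemma pow_sub_pow_mul_pow_sub_pow {x y : R} (hxy : x * y = 1) {i j : ℕ}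
    (hx : x ^ (2 * (i + j + 2)) = 1) :
    (x ^ (i + 1) - y ^ (i + 1)) * (x ^ (i + j + 1) - y ^ (i + j + 1)) =
      (x ^ (j + 1) - y ^ (j + 1)) * (x - y) := by
  have hy : y ^ (2 * (i + j + 2)) = 1 := by
    simpa [mul_pow, hx] using congrArg (· ^ (2 * (i + j + 2))) hxy
  have h₁ : (x * y) ^ (i + 1) = 1 := by rw [hxy, one_pow]
  have h₂ : (x * y) ^ (j + 2) = 1 := by rw [hxy, one_pow]
  linear_combination (y ^ j + x ^ j) * (hxy - h₁)
    - (x ^ (2 * i + j + 2) + y ^ (2 * i + j + 2)) * h₂ + y ^ (j + 2) * hx + x ^ (j + 2) * hy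

lemma aeval_e_mul_aeval_e {K : Type*} [Field K] {x y : K} (hxy : x * y = 1) (hne : x ≠ y)
    {i j m : ℕ} (hm : i + j = m) (hx : x ^ (2 * (m + 2)) = 1) :
    aeval (x + y) (e i) * aeval (x + y) (e m) = aeval (x + y) (e j) := by
  subst hm
  apply mul_right_cancel₀ (pow_ne_zero 2 (sub_ne_zero.2 hne))
  linear_combination aeval (x + y) (e (i + j)) * (x - y) * aeval_e_add_mul_sub hxy i
    + (x ^ (i + 1) - y ^ (i + 1)) * aeval_e_add_mul_sub hxy (i + j)
    - (x - y) * aeval_e_add_mul_sub hxy j + pow_sub_pow_mul_pow_sub_pow hxy hx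

lemma eq_aeval_e_mul_of_recurrence {x : R} {a : ℕ → R} {N : ℕ} (h₀ : a 0 = 0)
    (hrec : ∀ k, k + 2 ≤ N → a (k + 2) = x * a (k + 1) - a k) :
    ∀ k, k + 1 ≤ N → a (k + 1) = aeval x (e k) * a 1 := by
  intro k
  induction k using Nat.twoStepInduction with
  | zero => simp
  | one => intro hk; simp [hrec 0 hk, h₀]
  | more k ih₀ ih₁ =>
    intro hk
    rw [hrec (k + 1) hk, ih₁ (by omega), ih₀ (by omega), aeval_e_add_two]
    ring

lemma eq_neg_aeval_e_of_recurrence {K : Type*} [Field K] {x y : K} (hxy : x * y = 1)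
    (hne : x ≠ y) {N : ℕ} (hx : x ^ (2 * (N + 1)) = 1) {a : ℕ → K} (h₀ : a 0 = 0)
    (hN : a N = -1) (hrec : ∀ k, k + 2 ≤ N → a (k + 2) = (x + y) * a (k + 1) - a k)
    {k : ℕ} (hk₁ : 1 ≤ k) (hkN : k ≤ N) :
    a k = -aeval (x + y) (e (N - k)) := by
  have hsol := eq_aeval_e_mul_of_recurrence h₀ hrec
  have htop : aeval (x + y) (e (N - 1)) * a 1 = -1 := by
    rw [← hsol (N - 1) (by omega), Nat.sub_add_cancel (by omega), hN]
  have hprod := aeval_e_mul_aeval_e hxy hne (i := N - k) (j := k - 1) (m := N - 1) (by omega)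
    (by rwa [show N - 1 + 2 = N + 1 by omega])
  rw [← Nat.sub_add_cancel hk₁, hsol (k - 1) (by omega), Nat.sub_add_cancel hk₁, ← hprod]
  linear_combination aeval (x + y) (e (N - k)) * htop

end Chebyshev

lemma apply_linearCombination_of_tridiagonal {R V : Type*} [CommRing R] [AddCommGroup V]
    [Module R V] {σ : R →+* R} (B : V →ₗ[R] V →ₛₗ[σ] R) (v : ℕ → V) (x : R) {M : ℕ}
    (hdiag : ∀ j, 1 ≤ j → j ≤ M → B (v j) (v j) = x)
    (hadj : ∀ j k, 1 ≤ j → j ≤ M → 1 ≤ k → k ≤ M →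
      ((j : ℤ) - (k : ℤ)).natAbs = 1 → B (v j) (v k) = -1)
    (hfar : ∀ j k, 1 ≤ j → j ≤ M → 1 ≤ k → k ≤ M →
      1 < ((j : ℤ) - (k : ℤ)).natAbs → B (v j) (v k) = 0)
    {a : ℕ →₀ R} (ha : a ∈ Finsupp.supported R R (Set.Icc 1 M)) {k : ℕ} (hk : k + 1 ≤ M) :
    B (Finsupp.linearCombination R v a) (v (k + 1)) = x * a (k + 1) - a k - a (k + 2) := by
  have hgram : ∀ i ∈ a.support, a i * B (v i) (v (k + 1)) =
      x * (if i = k + 1 then a i else 0) - (if i = k then a i else 0)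
        - (if i = k + 2 then a i else 0) := by
    intro i hi
    obtain ⟨hi₁, hiM⟩ : 1 ≤ i ∧ i ≤ M := ha hi
    by_cases hdk : i = k + 1
    · simp [hdk, hdiag (k + 1) (by omega) hk, mul_comm]
    by_cases hnear : i = k ∨ i = k + 2
    · rw [hadj i (k + 1) hi₁ hiM (by omega) hk (by omega)]
      rcases hnear with rfl | rfl <;> simp
    · rw [hfar i (k + 1) hi₁ hiM (by omega) hk (by omega)]
      simp [hdk, not_or.1 hnear]
  rw [Finsupp.linearCombination_apply, Finsupp.sum, map_sum, LinearMap.sum_apply]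
  simp only [map_smul, LinearMap.smul_apply, smul_eq_mul]
  rw [Finset.sum_congr rfl hgram, Finset.sum_sub_distrib, Finset.sum_sub_distrib,
    ← Finset.mul_sum]
  simp only [Finset.sum_ite_eq', Finsupp.if_mem_support]

theorem last_vector_expansion_general (n : ℕ) (hn : 4 ≤ n)
    (s : ℂ) (hs0 : s ≠ 0) (hq : (s ^ 2) ^ n = 1) (hq1 : s ^ 2 ≠ 1)
    {V : Type*} [AddCommGroup V] [Module ℂ V]
    (B : V →ₗ[ℂ] V →ₛₗ[starRingEnd ℂ] ℂ)
    (v : ℕ → V)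
    (hdiag : ∀ j, 1 ≤ j → j ≤ n - 1 → B (v j) (v j) = -(-s - s⁻¹))
    (hadj : ∀ j k, 1 ≤ j → j ≤ n - 1 → 1 ≤ k → k ≤ n - 1 →
      ((j : ℤ) - (k : ℤ)).natAbs = 1 → B (v j) (v k) = -1)
    (hfar : ∀ j k, 1 ≤ j → j ≤ n - 1 → 1 ≤ k → k ≤ n - 1 →
      1 < ((j : ℤ) - (k : ℤ)).natAbs → B (v j) (v k) = 0)
    (hspan : v (n - 1) ∈ Submodule.span ℂ (v '' Set.Icc 1 (n - 2))) :
    v (n - 1) = ∑ j ∈ Finset.Icc 1 (n - 2),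
      ((-1 : ℂ) ^ (j + 1) * Polynomial.aeval (-s - s⁻¹) (e j)) • v (n - 1 - j) := by
  have hss : s * s⁻¹ = 1 := mul_inv_cancel₀ hs0
  have hne : s ≠ s⁻¹ := fun h => hq1 (by rw [sq]; nth_rw 2 [h]; exact hss)
  obtain ⟨c, hc, hcv⟩ := (Finsupp.mem_span_image_iff_linearCombination ℂ).1 hspan
  have hc_off : ∀ i, i ∉ Set.Icc 1 (n - 2) → c i = 0 :=
    fun i hi => Finsupp.notMem_support_iff.1 fun h => hi (hc h)
  set a := c - Finsupp.single (n - 1) 1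
  have ha : a ∈ Finsupp.supported ℂ ℂ (Set.Icc 1 (n - 1)) :=
    Submodule.sub_mem _ (Finsupp.supported_mono (Set.Icc_subset_Icc_right (by omega)) hc)
      (Finsupp.single_mem_supported ℂ _ (by simp; omega))
  have hrec : ∀ k, k + 2 ≤ n - 1 → a (k + 2) = (s + s⁻¹) * a (k + 1) - a k := by
    intro k hk
    have h := apply_linearCombination_of_tridiagonal B v (s + s⁻¹)
      (fun j h₁ h₂ => (hdiag j h₁ h₂).trans (by ring)) hadj hfar ha (k := k) (by omega)
    simp only [a, map_sub, hcv, Finsupp.linearCombination_single, one_smul, sub_self,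
      map_zero, LinearMap.zero_apply] at h
    linear_combination h
  have hcoef : ∀ k ∈ Finset.Icc 1 (n - 2), c k = -aeval (s + s⁻¹) (e (n - 1 - k)) := by
    intro k hk
    rw [Finset.mem_Icc] at hk
    have h := eq_neg_aeval_e_of_recurrence hss hne (N := n - 1)
      (by rwa [Nat.sub_add_cancel (by omega), pow_mul]) (a := a)
      (by simp [a, hc_off 0 (by simp), show n - 1 ≠ 0 by omega])
      (by simp [a, hc_off (n - 1) (by simp; omega)]) hrec hk.1 (by omega)
    simpa [a, show n - 1 ≠ k by omega] using h
  rw [← hcv, Finsupp.linearCombination_apply_of_mem_supported ℂ (s := Finset.Icc 1 (n - 2))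
    (by rwa [Finset.coe_Icc])]
  refine Finset.sum_nbij' (n - 1 - ·) (n - 1 - ·) ?_ ?_ ?_ ?_ fun k hk => ?_
  any_goals intro k hk; simp only [Finset.mem_Icc] at hk ⊢; omega
  have hkn : k ≤ n - 1 := (Finset.mem_Icc.1 hk).2.trans (by omega)
  rw [hcoef k hk, show -s - s⁻¹ = -(s + s⁻¹) by ring, aeval_neg_e, Nat.sub_sub_self hkn,
    ← mul_assoc, ← pow_add, Odd.neg_one_pow ⟨n - 1 - k, by ring⟩, neg_one_mul]

theorem last_vector_expansion (n : ℕ) (hn : 4 ≤ n) (hne : Even n)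
    (s : ℂ) (hs0 : s ≠ 0) (hq : (s ^ 2) ^ n = 1) (hq1 : s ^ 2 ≠ 1)
    {V : Type*} [AddCommGroup V] [Module ℂ V]
    (B : V →ₗ[ℂ] V →ₛₗ[starRingEnd ℂ] ℂ)
    (hherm : ∀ x y : V, B y x = starRingEnd ℂ (B x y))
    (v : ℕ → V)
    (hdiag : ∀ j, 1 ≤ j → j ≤ n - 1 → B (v j) (v j) = -(-s - s⁻¹))
    (hadj : ∀ j k, 1 ≤ j → j ≤ n - 1 → 1 ≤ k → k ≤ n - 1 →
      ((j : ℤ) - (k : ℤ)).natAbs = 1 → B (v j) (v k) = -1)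
    (hfar : ∀ j k, 1 ≤ j → j ≤ n - 1 → 1 ≤ k → k ≤ n - 1 →
      1 < ((j : ℤ) - (k : ℤ)).natAbs → B (v j) (v k) = 0)
    (hspan : v (n - 1) ∈ Submodule.span ℂ (v '' Set.Icc 1 (n - 2))) :
    v (n - 1) = ∑ j ∈ Finset.Icc 1 (n - 2),
      ((-1 : ℂ) ^ (j + 1) * Polynomial.aeval (-s - s⁻¹) (e j)) • v (n - 1 - j) :=
  last_vector_expansion_general n hn s hs0 hq hq1 B v hdiag hadj hfar hspan
end

section
/- Let N ≥ 1 be an integer and let A ∈ ℂ be a primitive 8N-th root of unity. Then (−A)^{N²+2N} · A^{N²} · Σ_{k=0}^{N−1} A^{−4k−2} = 2·(−1)^N · A^{2N²+2N}/(A² − A^{−2}), and this quantity is nonzero. -/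
/-!
Multiplied by `A² - A⁻²`, the sum telescopes to `1 - A^(-4N)`, and `A^(4N) = -1` because `A` has
order `8N`; so the sum is `2 / (A² - A⁻²)`, where the denominator is nonzero because `A⁴ ≠ 1`.
The sign comes from `N² + 2N ≡ N (mod 2)`.
-/

theorem IsPrimitiveRoot.pow_eq_neg_one_of_two_mul {R : Type*} [CommRing R] [NoZeroDivisors R]
    {ζ : R} {n : ℕ} (hn : 0 < n) (h : IsPrimitiveRoot ζ (2 * n)) : ζ ^ n = -1 :=
  (h.pow (by omega) (mul_comm 2 n)).eq_neg_one_of_two_right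

theorem sum_range_zpow_mul_sq_sub_zpow {K : Type*} [DivisionRing K] {a : K} (ha : a ≠ 0)
    (n : ℕ) :
    (∑ k ∈ Finset.range n, a ^ (-(4 * (k : ℤ) + 2))) * (a ^ 2 - a ^ (-2 : ℤ)) =
      1 - a ^ (-(4 * (n : ℤ))) := by
  have hterm : ∀ k : ℕ, a ^ (-(4 * (k : ℤ) + 2)) * (a ^ 2 - a ^ (-2 : ℤ)) =
      a ^ (-(4 * (k : ℤ))) - a ^ (-(4 * ((k + 1 : ℕ) : ℤ))) := by
    intro k
    rw [mul_sub, ← zpow_natCast, ← zpow_add₀ ha, ← zpow_add₀ ha]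
    push_cast
    ring_nf
  rw [Finset.sum_mul, Finset.sum_congr rfl fun k _ => hterm k, Finset.sum_range_sub']
  simp

theorem neg_one_pow_sq_add_two_mul {M : Type*} [Monoid M] [HasDistribNeg M] (n : ℕ) :
    (-1 : M) ^ (n ^ 2 + 2 * n) = (-1) ^ n := by
  rw [show n ^ 2 + 2 * n = n * (n + 1) + n by ring, pow_add,
    (Nat.even_mul_succ_self n).neg_one_pow, one_mul]

theorem sq_sub_zpow_neg_two_ne_zero {K : Type*} [DivisionRing K] {a : K} (ha : a ≠ 0)
    (h4 : a ^ 4 ≠ 1) : a ^ 2 - a ^ (-2 : ℤ) ≠ 0 := by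
  intro h
  apply h4
  calc a ^ 4 = a ^ 2 * a ^ (-2 : ℤ) := by rw [← sub_eq_zero.mp h, ← pow_add]
    _ = 1 := by rw [← zpow_natCast, ← zpow_add₀ ha]; norm_num

theorem matrix_entry_nonzero (N : ℕ) (hN : 1 ≤ N) (A : ℂ)
    (hA : IsPrimitiveRoot A (8 * N)) :
    ((-A) ^ (N ^ 2 + 2 * N) * A ^ (N ^ 2) *
        ∑ k ∈ Finset.range N, A ^ (-(4 * (k : ℤ) + 2)) =
      2 * (-1) ^ N * A ^ (2 * N ^ 2 + 2 * N) / (A ^ 2 - A ^ (-2 : ℤ))) ∧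
    (-A) ^ (N ^ 2 + 2 * N) * A ^ (N ^ 2) *
        ∑ k ∈ Finset.range N, A ^ (-(4 * (k : ℤ) + 2)) ≠ 0 := by
  have hA0 : A ≠ 0 := hA.ne_zero (by omega)
  have hA4 : A ^ 4 ≠ 1 := hA.pow_ne_one_of_pos_of_lt (by norm_num) (by omega)
  have hden : A ^ 2 - A ^ (-2 : ℤ) ≠ 0 := sq_sub_zpow_neg_two_ne_zero hA0 hA4
  have hhalf : A ^ (-(4 * (N : ℤ))) = -1 := by
    rw [zpow_neg, show 4 * (N : ℤ) = ((4 * N : ℕ) : ℤ) by push_cast; rfl, zpow_natCast,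
      IsPrimitiveRoot.pow_eq_neg_one_of_two_mul (by omega) (by rwa [← mul_assoc]), inv_neg_one]
  have hsum : ∑ k ∈ Finset.range N, A ^ (-(4 * (k : ℤ) + 2)) = 2 / (A ^ 2 - A ^ (-2 : ℤ)) := by
    rw [eq_div_iff hden, sum_range_zpow_mul_sq_sub_zpow hA0, hhalf]
    norm_num
  have key : (-A) ^ (N ^ 2 + 2 * N) * A ^ (N ^ 2) *
      ∑ k ∈ Finset.range N, A ^ (-(4 * (k : ℤ) + 2)) =
      2 * (-1) ^ N * A ^ (2 * N ^ 2 + 2 * N) / (A ^ 2 - A ^ (-2 : ℤ)) := by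
    rw [hsum, neg_pow, neg_one_pow_sq_add_two_mul]
    ring
  refine ⟨key, key ▸ div_ne_zero ?_ hden⟩
  exact mul_ne_zero (mul_ne_zero two_ne_zero (pow_ne_zero _ (neg_ne_zero.mpr one_ne_zero)))
    (pow_ne_zero _ hA0)
end
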